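/- Let n be odd with k distinct prime divisors, and let P be a set of permutations of ZMod n such that the sum of any two distinct elements of P is not a permutation. Then |P| ≤ 2^k · (n-1)! / φ(n). -/

import Mathlib

/-!
Let `g = (u, c)` with `u` a unit act on permutations by `ρ ↦ u • ρ + c`. Each `g` permutes the
permutations, so double counting pairs `(g, ρ)` with `g • ρ ∈ P` gives
`n φ(n) |P| ≤ n! · max_ρ #{g | g • ρ ∈ P}`. The action is free, and if `g • ρ`, `h • ρ` are
distinct members of `P`, their sum is `(u + u') • ρ + const`, which is a
permutation as soon as `u + u'` is a unit; as `2` is a unit, `g ↦ u` is injective on such `g`,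
and its image is a set of units with pairwise non-unit sums. Such a set has at most `2 ^ k`
elements: two of them with equal sign patterns of their symmetric residues modulo each prime
`p ∣ n` cannot be opposite modulo any such `p`, so their sum would be a unit.
-/

open Finset

namespace ZMod

lemma exists_mem_primeFactors_cast_eq_zero {n : ℕ} [NeZero n] {x : ZMod n} (hx : ¬IsUnit x) :
    ∃ p ∈ n.primeFactors, (x.cast : ZMod p) = 0 := by
  have hcop : ¬x.val.Coprime n := fun h => hx <| by
    rw [← natCast_zmod_val x]
    exact (isUnit_iff_coprime x.val n).2 h
  obtain ⟨p, hp, hpgcd⟩ := Nat.exists_prime_and_dvd hcop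
  refine ⟨p, Nat.mem_primeFactors.2 ⟨hp, hpgcd.trans (Nat.gcd_dvd_right _ _), NeZero.ne n⟩, ?_⟩
  rw [cast_eq_val, natCast_eq_zero_iff]
  exact hpgcd.trans (Nat.gcd_dvd_left _ _)

lemma valMinAbs_neg_pos_iff {m : ℕ} (hm : Odd m) {y : ZMod m} (hy : y ≠ 0) :
    0 < (-y).valMinAbs ↔ ¬0 < y.valMinAbs := by
  have hhalf : 2 * y.val ≠ m := fun h => Nat.not_odd_iff_even.2 (even_two_mul _) (h ▸ hm)
  have hy' : y.valMinAbs ≠ 0 := (valMinAbs_eq_zero y).not.2 hy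
  rw [valMinAbs_neg_of_ne_half hhalf]
  omega

theorem card_le_two_pow_of_pairwise_not_isUnit_add {n : ℕ} (hn : Odd n) (S : Finset (ZMod n))
    (hunit : ∀ a ∈ S, IsUnit a) (hS : (S : Set (ZMod n)).Pairwise fun a b => ¬IsUnit (a + b)) :
    #S ≤ 2 ^ n.primeFactors.card := by
  have : NeZero n := ⟨hn.pos.ne'⟩
  let sign : ZMod n → n.primeFactors → Bool := fun x p => decide (0 < (x.cast : ZMod p).valMinAbs)
  have hinj : Set.InjOn sign S := by
    intro x hx y hy hsign
    by_contra hne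
    obtain ⟨p, hp, hxy⟩ := exists_mem_primeFactors_cast_eq_zero (hS hx hy hne)
    have hdvd := Nat.dvd_of_mem_primeFactors hp
    have : Fact p.Prime := ⟨Nat.prime_of_mem_primeFactors hp⟩
    have hx' : (x.cast : ZMod p) = -(y.cast : ZMod p) := by
      rw [cast_add hdvd] at hxy
      exact eq_neg_of_add_eq_zero_left hxy
    have hy0 : (y.cast : ZMod p) ≠ 0 := ((hunit y hy).map (castHom hdvd (ZMod p))).ne_zero
    have := congrFun hsign ⟨p, hp⟩
    simp only [sign, hx', decide_eq_decide, valMinAbs_neg_pos_iff (hn.of_dvd_nat hdvd) hy0] at this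
    tauto
  calc #S ≤ #(univ : Finset (n.primeFactors → Bool)) :=
        card_le_card_of_injOn sign (fun _ _ => mem_univ _) hinj
    _ = 2 ^ n.primeFactors.card := by simp

end ZMod

section Affine

variable {R : Type*} [Ring R]

def affinePerm (g : Rˣ × R) : Equiv.Perm R :=
  (Units.mulLeft g.1).trans (Equiv.addRight g.2)

@[simp]
lemma affinePerm_apply (g : Rˣ × R) (x : R) : affinePerm g x = g.1 * x + g.2 := rfl

lemma affinePerm_injective : Function.Injective (affinePerm (R := R)) := by
  intro g h hgh
  have h0 : g.2 = h.2 := by simpa using Equiv.congr_fun hgh 0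
  have h1 := Equiv.congr_fun hgh 1
  simp only [affinePerm_apply, mul_one, h0, add_left_inj] at h1
  exact Prod.ext (Units.ext h1) h0

lemma not_isUnit_add_of_affinePerm_mul_mem {P : Finset (Equiv.Perm R)}
    (hP : ∀ σ ∈ P, ∀ τ ∈ P, σ ≠ τ → ¬Function.Bijective fun i => σ i + τ i)
    {ρ : Equiv.Perm R} {g h : Rˣ × R} (hgh : g ≠ h)
    (hg : affinePerm g * ρ ∈ P) (hh : affinePerm h * ρ ∈ P) : ¬IsUnit (g.1 + h.1 : R) := by
  intro hu
  refine hP _ hg _ hh (fun he => hgh (affinePerm_injective (mul_right_cancel he))) ?_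
  convert (affinePerm (hu.unit, g.2 + h.2) * ρ).bijective using 1
  ext i
  simp only [Equiv.Perm.mul_apply, affinePerm_apply, IsUnit.unit_spec]
  noncomm_ring

variable [Fintype R] [DecidableEq R]

lemma sum_card_affinePerm_mul_mem (P : Finset (Equiv.Perm R)) :
    ∑ ρ : Equiv.Perm R, #{g : Rˣ × R | affinePerm g * ρ ∈ P} = Fintype.card (Rˣ × R) * #P := by
  have hfix (g : Rˣ × R) : #{ρ : Equiv.Perm R | affinePerm g * ρ ∈ P} = #P := by
    rw [card_filter]
    exact (Equiv.sum_comp (Equiv.mulLeft (affinePerm g)) fun σ => if σ ∈ P then 1 else 0).trans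
      (by simp)
  simp_rw [card_filter]
  rw [sum_comm]
  simp [hfix]

theorem card_affinePerm_mul_mem_le {P : Finset (Equiv.Perm R)}
    (hP : ∀ σ ∈ P, ∀ τ ∈ P, σ ≠ τ → ¬Function.Bijective fun i => σ i + τ i)
    (h2 : IsUnit (2 : R)) (ρ : Equiv.Perm R) {N : ℕ}
    (hN : ∀ S : Finset R, (∀ a ∈ S, IsUnit a) →
      (S : Set R).Pairwise (fun a b => ¬IsUnit (a + b)) → #S ≤ N) :
    #{g : Rˣ × R | affinePerm g * ρ ∈ P} ≤ N := by
  set G := ({g : Rˣ × R | affinePerm g * ρ ∈ P} : Finset _)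
  have hsum {g h : Rˣ × R} (hg : g ∈ G) (hh : h ∈ G) (hgh : g ≠ h) : ¬IsUnit (g.1 + h.1 : R) :=
    not_isUnit_add_of_affinePerm_mul_mem hP hgh (mem_filter.1 hg).2 (mem_filter.1 hh).2
  have hinj : Set.InjOn (fun g : Rˣ × R => (g.1 : R)) G := by
    intro g hg h hh he
    by_contra hgh
    refine hsum hg hh hgh ?_
    simpa [← he, ← two_mul] using h2.mul g.1.isUnit
  rw [← card_image_of_injOn hinj]
  refine hN _ (by simp only [mem_image]; rintro _ ⟨g, -, rfl⟩; exact g.1.isUnit) ?_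
  simp only [coe_image]
  rintro _ ⟨g, hg, rfl⟩ _ ⟨h, hh, rfl⟩ hne
  exact hsum hg hh fun hgh => hne (by rw [hgh])

end Affine

theorem stmt15 (n : ℕ) (hn : Odd n) (P : Finset (Equiv.Perm (ZMod n)))
    (h : ∀ σ ∈ P, ∀ τ ∈ P, σ ≠ τ → ¬ Function.Bijective (fun i => σ i + τ i)) :
    P.card ≤ 2 ^ n.primeFactors.card * (n - 1).factorial / n.totient := by
  have : NeZero n := ⟨hn.pos.ne'⟩
  have h2 : IsUnit (2 : ZMod n) := by
    exact_mod_cast (ZMod.isUnit_iff_coprime 2 n).2 hn.coprime_two_left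
  have hcount : n * (#P * n.totient) ≤ n * (2 ^ n.primeFactors.card * (n - 1).factorial) :=
    calc n * (#P * n.totient) = Fintype.card ((ZMod n)ˣ × ZMod n) * #P := by
          rw [Fintype.card_prod, ZMod.card_units_eq_totient, ZMod.card]; ring
      _ = ∑ ρ : Equiv.Perm (ZMod n), #{g : (ZMod n)ˣ × ZMod n | affinePerm g * ρ ∈ P} :=
          (sum_card_affinePerm_mul_mem P).symm
      _ ≤ ∑ _ρ : Equiv.Perm (ZMod n), 2 ^ n.primeFactors.card :=
          sum_le_sum fun ρ _ => card_affinePerm_mul_mem_le h h2 ρ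
            (ZMod.card_le_two_pow_of_pairwise_not_isUnit_add hn)
      _ = n * (2 ^ n.primeFactors.card * (n - 1).factorial) := by
          rw [sum_const, card_univ, Fintype.card_perm, ZMod.card, smul_eq_mul,
            ← Nat.mul_factorial_pred hn.pos.ne']
          ring
  rw [Nat.le_div_iff_mul_le (Nat.totient_pos.2 hn.pos)]
  exact Nat.le_of_mul_le_mul_left hcount hn.pos
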